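/- Let κ ∈ ℝ^n with κ - ε := (κ_1-ε,…,κ_n-ε) ∈ Γ_k^+, and let 1 ≤ i < j ≤ k and 1 ≤ p ≤ n. Then (j-1) H_{j-2;p}(κ-ε) H_i(κ-ε) > (i-1) H_j(κ-ε) H_{i-2;p}(κ-ε) whenever j ≥ 2, where H_{m;p} denotes the normalized mth elementary symmetric polynomial of the (n-1) variables obtained by deleting the pth entry (with the convention H_{-1;p} = 0, H_{0;p} = 1). -/

import Mathlib

/-!
Write `E_m` for the normalized elementary symmetric means of `x = κ - ε` and `F_m` for those of
`x` with its `p`-th entry `a` deleted, so that `n E_{m+1} = (n - 1 - m) F_{m+1} + (m + 1) a F_m`.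
Newton's inequalities `E_{m-1} E_{m+1} ≤ E_m²` hold for every real vector: by Rolle's theorem,
differentiating `∏ (X - x_i)` keeps the means, which reduces to vectors with `m + 1` entries, and
inverting the entries then reduces to `E_0 E_2 ≤ E_1²`. Playing the expansion at two consecutive
levels against Newton's inequality for `F` shows first that `F_m > 0` for `m < k`, and then that
`m ↦ (m - 1) F_{m-2} / E_m` is strictly increasing on `[1, k]`, which is the claim.
-/

/-- The `k`-th elementary symmetric polynomial of `x ∈ ℝⁿ`. -/
noncomputable def sigmaE (n k : ℕ) (x : Fin n → ℝ) : ℝ :=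
  ∑ s ∈ Finset.powersetCard k (Finset.univ : Finset (Fin n)), ∏ i ∈ s, x i

/-- The normalized `k`-th elementary symmetric polynomial `H_k = σ_k / C(n,k)`. -/
noncomputable def Hnorm (n k : ℕ) (x : Fin n → ℝ) : ℝ := sigmaE n k x / (n.choose k)

/-- The Gårding cone `Γ_k⁺ = {x : σ_i(x) > 0 for all 1 ≤ i ≤ k}`. -/
def GardingCone (n k : ℕ) : Set (Fin n → ℝ) :=
  {x | ∀ i, 1 ≤ i → i ≤ k → 0 < sigmaE n i x}

/-- The `m`-th elementary symmetric polynomial of the `n-1` variables obtained by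
deleting the `p`-th entry of `x`. -/
noncomputable def sigmaDel (n m : ℕ) (p : Fin n) (x : Fin n → ℝ) : ℝ :=
  ∑ s ∈ Finset.powersetCard m ((Finset.univ : Finset (Fin n)).erase p), ∏ i ∈ s, x i

/-- The normalized version `H_{m;p} = σ_{m;p} / C(n-1,m)`. -/
noncomputable def HnormDel (n m : ℕ) (p : Fin n) (x : Fin n → ℝ) : ℝ :=
  sigmaDel n m p x / ((n-1).choose m)

open Polynomial

namespace Multiset

section Esymm

variable {R : Type*} [CommSemiring R]

@[simp]
theorem esymm_zero_right (s : Multiset R) : s.esymm 0 = 1 := by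
  simp [esymm]

theorem esymm_eq_zero_of_card_lt {s : Multiset R} {k : ℕ} (h : card s < k) : s.esymm k = 0 := by
  simp [esymm, powersetCard_eq_empty _ h]

theorem esymm_card (s : Multiset R) : s.esymm (card s) = s.prod := by
  simp [esymm, powersetCard_self]

theorem esymm_cons_succ (a : R) (s : Multiset R) (k : ℕ) :
    (a ::ₘ s).esymm (k + 1) = s.esymm (k + 1) + a * s.esymm k := by
  simp only [esymm, powersetCard_cons, map_add, sum_add, map_map, Function.comp_def, prod_cons,
    sum_map_mul_left]

end Esymm

theorem prod_mul_esymm_map_inv {K : Type*} [Field K] {s : Multiset K} (hs : (0 : K) ∉ s) :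
    ∀ {i j : ℕ}, i + j = card s → s.prod * (s.map (·⁻¹)).esymm j = s.esymm i := by
  induction s using Multiset.induction_on with
  | empty => intro i j h; simp_all
  | cons a t ih =>
    rw [mem_cons, not_or] at hs
    have hinv : a * a⁻¹ = 1 := mul_inv_cancel₀ (Ne.symm hs.1)
    replace ih := @ih hs.2
    intro i j hij
    rw [card_cons] at hij
    rw [prod_cons, map_cons]
    rcases i with _ | i <;> rcases j with _ | j
    · omega
    · have := ih (by omega : 0 + j = card t)
      rw [esymm_cons_succ, esymm_eq_zero_of_card_lt (by rw [card_map]; omega), esymm_zero_right]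
      rw [esymm_zero_right] at this
      linear_combination this + t.prod * (t.map (·⁻¹)).esymm j * hinv
    · rw [esymm_cons_succ, esymm_eq_zero_of_card_lt (by omega : card t < i + 1),
        ← ih (by omega : i + 0 = card t)]
      simp
    · rw [esymm_cons_succ, esymm_cons_succ, ← ih (by omega : i + (j + 1) = card t),
        ← ih (by omega : (i + 1) + j = card t)]
      linear_combination t.prod * (t.map (·⁻¹)).esymm j * hinv

/-- For `card s < k` both `esymm` and the binomial coefficient vanish, and the value is `0`. -/
noncomputable def esymmAvg (s : Multiset ℝ) (k : ℕ) : ℝ := s.esymm k / (card s).choose k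

@[simp]
theorem esymmAvg_zero_right (s : Multiset ℝ) : s.esymmAvg 0 = 1 := by
  simp [esymmAvg]

theorem esymmAvg_mul_choose (s : Multiset ℝ) (k : ℕ) :
    s.esymmAvg k * (card s).choose k = s.esymm k := by
  rcases lt_or_ge (card s) k with h | h
  · simp [esymmAvg, esymm_eq_zero_of_card_lt h]
  · exact div_mul_cancel₀ _ (by exact_mod_cast (Nat.choose_pos h).ne')

theorem esymmAvg_eq_zero_of_card_lt {s : Multiset ℝ} {k : ℕ} (h : card s < k) :
    s.esymmAvg k = 0 := by
  simp [esymmAvg, esymm_eq_zero_of_card_lt h]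

theorem esymmAvg_pos_iff {s : Multiset ℝ} {k : ℕ} : 0 < s.esymmAvg k ↔ 0 < s.esymm k := by
  rcases lt_or_ge (card s) k with h | h
  · simp [esymmAvg, esymm_eq_zero_of_card_lt h]
  · exact div_pos_iff_of_pos_right (by exact_mod_cast Nat.choose_pos h)

theorem le_card_of_esymmAvg_pos {s : Multiset ℝ} {k : ℕ} (h : 0 < s.esymmAvg k) : k ≤ card s := by
  by_contra! hk
  simp [esymmAvg_eq_zero_of_card_lt hk] at h

theorem exists_card_eq_pred_esymmAvg_eq (s : Multiset ℝ) {d : ℕ} (hs : card s = d + 1) :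
    ∃ w : Multiset ℝ, card w = d ∧ ∀ j ≤ d, w.esymmAvg j = s.esymmAvg j := by
  set P : ℝ[X] := (s.map fun a => X - C a).prod
  have hPdeg : P.natDegree = d + 1 := by
    rw [natDegree_multiset_prod_X_sub_C_eq_card, hs]
  have hdeg : (derivative P).natDegree = d := by
    rw [natDegree_derivative, hPdeg, Nat.add_sub_cancel]
  -- Rolle: between consecutive roots of `P` lies a root of `P'`, so all roots of `P'` are real.
  have hroots : card (derivative P).roots = (derivative P).natDegree := by
    have := card_roots_le_derivative P
    rw [roots_multiset_prod_X_sub_C, hs] at this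
    exact le_antisymm (card_roots' _) (by omega)
  have hlead : (derivative P).leadingCoeff = d + 1 := by
    rw [leadingCoeff, hdeg, coeff_derivative, prod_X_sub_C_coeff s (by omega), hs]
    simp
  refine ⟨(derivative P).roots, by rw [hroots, hdeg], fun j hj => ?_⟩
  have hcoeff := coeff_eq_esymm_roots_of_card hroots (k := d - j) (by omega)
  rw [coeff_derivative, prod_X_sub_C_coeff s (by omega), hlead, hdeg, hs,
    show d + 1 - (d - j + 1) = j by omega, show d - (d - j) = j by omega] at hcoeff
  have hchoose : (d.choose j : ℝ) * (d + 1) = (d + 1).choose j * (d - j + 1 : ℕ) := by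
    rw [show d - j + 1 = d + 1 - j by omega]; exact_mod_cast Nat.choose_mul_succ_eq d j
  have hpos : (0 : ℝ) < (d + 1).choose j := by exact_mod_cast Nat.choose_pos (by omega)
  have hpos' : (0 : ℝ) < d.choose j := by exact_mod_cast Nat.choose_pos hj
  have hcast : ((d - j : ℕ) : ℝ) + 1 = ((d - j + 1 : ℕ) : ℝ) := by push_cast; ring
  rw [hcast] at hcoeff
  rw [esymmAvg, esymmAvg, hs, hroots, hdeg, div_eq_div_iff hpos'.ne' hpos.ne']
  apply mul_right_cancel₀ (show ((d : ℝ) + 1) * (-1) ^ j ≠ 0 by positivity)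
  linear_combination (-((d + 1).choose j : ℝ)) * hcoeff - (-1) ^ j * s.esymm j * hchoose

theorem exists_card_eq_esymmAvg_eq (s : Multiset ℝ) {r : ℕ} (hr : r ≤ card s) :
    ∃ w : Multiset ℝ, card w = r ∧ ∀ j ≤ r, w.esymmAvg j = s.esymmAvg j := by
  induction hr using Nat.decreasingInduction with
  | self => exact ⟨s, rfl, fun _ _ => rfl⟩
  | of_succ r _ ih =>
    obtain ⟨w, hw, hws⟩ := ih
    obtain ⟨v, hv, hvw⟩ := exists_card_eq_pred_esymmAvg_eq w hw
    exact ⟨v, hv, fun j hj => (hvw j hj).trans (hws j (by omega))⟩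

theorem esymmAvg_two_le_sq (s : Multiset ℝ) : s.esymmAvg 2 ≤ s.esymmAvg 1 ^ 2 := by
  rcases lt_or_ge (card s) 2 with hs | hs
  · rw [esymmAvg_eq_zero_of_card_lt hs]; positivity
  obtain ⟨w, hw, hws⟩ := exists_card_eq_esymmAvg_eq s hs
  obtain ⟨u, v, rfl⟩ := card_eq_two.mp hw
  have hamgm : u * v ≤ ((u + v) / 2) ^ 2 := by nlinarith [sq_nonneg (u - v)]
  rw [← hws 1 (by norm_num), ← hws 2 le_rfl, esymmAvg, esymmAvg, hw]
  simpa using hamgm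

theorem esymmAvg_card (s : Multiset ℝ) : s.esymmAvg (card s) = s.prod := by
  simp [esymmAvg, esymm_card]

theorem esymmAvg_eq_prod_mul_esymmAvg_map_inv {s : Multiset ℝ} (hs : (0 : ℝ) ∉ s) {i j : ℕ}
    (hij : i + j = card s) : s.esymmAvg i = s.prod * (s.map (·⁻¹)).esymmAvg j := by
  rw [esymmAvg, esymmAvg, card_map, ← prod_mul_esymm_map_inv hs hij, ← hij, Nat.choose_symm_add,
    mul_div_assoc]

theorem esymmAvg_mul_esymmAvg_le_sq (s : Multiset ℝ) (r : ℕ) :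
    s.esymmAvg r * s.esymmAvg (r + 2) ≤ s.esymmAvg (r + 1) ^ 2 := by
  rcases lt_or_ge (card s) (r + 2) with hs | hs
  · rw [esymmAvg_eq_zero_of_card_lt hs, mul_zero]; positivity
  obtain ⟨w, hw, hws⟩ := exists_card_eq_esymmAvg_eq s hs
  rw [← hws r (by omega), ← hws (r + 1) (by omega), ← hws (r + 2) le_rfl]
  have htop : w.esymmAvg (r + 2) = w.prod := by rw [← hw, esymmAvg_card]
  by_cases h0 : (0 : ℝ) ∈ w
  · rw [htop, prod_eq_zero h0, mul_zero]; positivity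
  rw [esymmAvg_eq_prod_mul_esymmAvg_map_inv h0 (by omega : r + 2 = card w),
    esymmAvg_eq_prod_mul_esymmAvg_map_inv h0 (by omega : r + 1 + 1 = card w), htop]
  calc w.prod * (w.map (·⁻¹)).esymmAvg 2 * w.prod
      = w.prod ^ 2 * (w.map (·⁻¹)).esymmAvg 2 := by ring
    _ ≤ w.prod ^ 2 * (w.map (·⁻¹)).esymmAvg 1 ^ 2 := by gcongr; exact esymmAvg_two_le_sq _
    _ = (w.prod * (w.map (·⁻¹)).esymmAvg 1) ^ 2 := by ring

theorem card_add_one_mul_esymmAvg_cons (a : ℝ) (t : Multiset ℝ) {m : ℕ} (hm : m ≤ card t) :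
    (card t + 1) * (a ::ₘ t).esymmAvg (m + 1)
      = (card t - m) * t.esymmAvg (m + 1) + (m + 1) * a * t.esymmAvg m := by
  have h₁ : ((card t).choose (m + 1) : ℝ) * (card t + 1)
      = (card t + 1).choose (m + 1) * (card t - m) := by
    rw [← Nat.cast_sub hm, ← Nat.add_sub_add_right (card t) 1 m]
    exact_mod_cast Nat.choose_mul_succ_eq (card t) (m + 1)
  have h₂ : (card t + 1 : ℝ) * (card t).choose m = (card t + 1).choose (m + 1) * (m + 1) := by
    exact_mod_cast Nat.add_one_mul_choose_eq (card t) m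
  have hpos : (0 : ℝ) < (card t + 1).choose (m + 1) := by
    exact_mod_cast Nat.choose_pos (by omega)
  have hcons := esymmAvg_mul_choose (a ::ₘ t) (m + 1)
  rw [card_cons, esymm_cons_succ, ← esymmAvg_mul_choose t (m + 1),
    ← esymmAvg_mul_choose t m] at hcons
  apply mul_right_cancel₀ hpos.ne'
  linear_combination (card t + 1 : ℝ) * hcons + t.esymmAvg (m + 1) * h₁ + a * t.esymmAvg m * h₂

section Deletion

variable {a : ℝ} {t : Multiset ℝ} {k : ℕ}

theorem esymmAvg_pos_of_cons (hpos : ∀ i, 1 ≤ i → i ≤ k → 0 < (a ::ₘ t).esymmAvg i) {m : ℕ}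
    (hm : m < k) : 0 < t.esymmAvg m := by
  induction m with
  | zero => simp
  | succ m ih =>
    have hF₀ := ih (by omega)
    -- If `F_{m+1} ≤ 0`, the expansions at levels `m + 1` and `m + 2` force `a > 0` and
    -- bound `F_{m+1}²` strictly above by a multiple of `F_m F_{m+2}`, against Newton.
    by_contra! hF₁
    have hE₁ := hpos (m + 1) (by omega) (by omega)
    have hE₂ := hpos (m + 2) (by omega) (by omega)
    have hcard : m + 1 ≤ card t := by
      have := le_card_of_esymmAvg_pos hE₂
      rw [card_cons] at this
      omega
    have hd : (m : ℝ) + 1 ≤ card t := by exact_mod_cast hcard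
    have h₁ := card_add_one_mul_esymmAvg_cons a t (m := m) (by omega)
    have h₂ := card_add_one_mul_esymmAvg_cons a t (m := m + 1) hcard
    push_cast at h₂
    set d : ℝ := (card t : ℝ)
    set F₀ := t.esymmAvg m
    set F₁ := t.esymmAvg (m + 1)
    set F₂ := t.esymmAvg (m + 1 + 1)
    have hE₁' : 0 < (d + 1) * (a ::ₘ t).esymmAvg (m + 1) := by positivity
    have hE₂' : 0 < (d + 1) * (a ::ₘ t).esymmAvg (m + 1 + 1) := by positivity
    have u₁ : (d - m) * -F₁ < (m + 1) * a * F₀ := by linarith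
    have u₂ : (m + 1 + 1) * a * -F₁ < (d - (m + 1)) * F₂ := by linarith
    have hnn₁ : 0 ≤ (d - m) * -F₁ := mul_nonneg (by linarith) (by linarith)
    have ha : 0 < a := by
      by_contra! ha
      have : (m + 1) * a * F₀ ≤ 0 :=
        mul_nonpos_of_nonpos_of_nonneg (mul_nonpos_of_nonneg_of_nonpos (by positivity) ha) hF₀.le
      linarith
    have hprod := mul_lt_mul'' u₁ u₂ hnn₁ (mul_nonneg (by positivity) (by linarith))
    nlinarith [esymmAvg_mul_esymmAvg_le_sq t m, sq_nonneg F₁, mul_pos ha hF₀]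

theorem esymmAvg_mul_esymmAvg_cons_lt (hpos : ∀ i, 1 ≤ i → i ≤ k → 0 < (a ::ₘ t).esymmAvg i)
    {l : ℕ} (hl : l + 3 ≤ k) :
    (l + 1) * t.esymmAvg l * (a ::ₘ t).esymmAvg (l + 3)
      < (l + 2) * t.esymmAvg (l + 1) * (a ::ₘ t).esymmAvg (l + 2) := by
  have hF₀ := esymmAvg_pos_of_cons hpos (m := l) (by omega)
  have hF₁ := esymmAvg_pos_of_cons hpos (m := l + 1) (by omega)
  have hE₂ := hpos (l + 2) (by omega) (by omega)
  have hE₃ := hpos (l + 3) (by omega) hl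
  have hcard : l + 2 ≤ card t := by
    have := le_card_of_esymmAvg_pos hE₃
    rw [card_cons] at this
    omega
  have hd : (l : ℝ) + 2 ≤ card t := by exact_mod_cast hcard
  have h₁ := card_add_one_mul_esymmAvg_cons a t (m := l) (by omega)
  have h₂ := card_add_one_mul_esymmAvg_cons a t (m := l + 1) (by omega)
  push_cast at h₂
  have hQ : (l + 1) * t.esymmAvg l * (a ::ₘ t).esymmAvg (l + 2)
      < (l + 2) * t.esymmAvg (l + 1) * (a ::ₘ t).esymmAvg (l + 1) := by
    have key : (card t + 1 : ℝ) * ((l + 2) * t.esymmAvg (l + 1) * (a ::ₘ t).esymmAvg (l + 1)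
        - (l + 1) * t.esymmAvg l * (a ::ₘ t).esymmAvg (l + 2))
        = (l + 2) * (card t - l) * t.esymmAvg (l + 1) ^ 2
          - (l + 1) * (card t - (l + 1)) * (t.esymmAvg l * t.esymmAvg (l + 2)) := by
      linear_combination (l + 2) * t.esymmAvg (l + 1) * h₁ - (l + 1) * t.esymmAvg l * h₂
    have hNewton := mul_le_mul_of_nonneg_left (esymmAvg_mul_esymmAvg_le_sq t l)
      (by nlinarith : (0 : ℝ) ≤ (l + 1) * (card t - (l + 1)))
    have : 0 < (card t + 1 : ℝ) * ((l + 2) * t.esymmAvg (l + 1) * (a ::ₘ t).esymmAvg (l + 1)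
        - (l + 1) * t.esymmAvg l * (a ::ₘ t).esymmAvg (l + 2)) := by
      rw [key]; nlinarith [pow_pos hF₁ 2]
    nlinarith [pos_of_mul_pos_right this (by positivity)]
  have hNewton := esymmAvg_mul_esymmAvg_le_sq (a ::ₘ t) (l + 1)
  refine lt_of_mul_lt_mul_right ?_ hE₂.le
  calc (l + 1) * t.esymmAvg l * (a ::ₘ t).esymmAvg (l + 3) * (a ::ₘ t).esymmAvg (l + 2)
      = (l + 1) * t.esymmAvg l * (a ::ₘ t).esymmAvg (l + 2) * (a ::ₘ t).esymmAvg (l + 3) := by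
        ring
    _ < (l + 2) * t.esymmAvg (l + 1) * (a ::ₘ t).esymmAvg (l + 1) * (a ::ₘ t).esymmAvg (l + 3) :=
        mul_lt_mul_of_pos_right hQ hE₃
    _ ≤ (l + 2) * t.esymmAvg (l + 1) * (a ::ₘ t).esymmAvg (l + 2) ^ 2 := by
        rw [mul_assoc _ ((a ::ₘ t).esymmAvg (l + 1))]
        gcongr
    _ = (l + 2) * t.esymmAvg (l + 1) * (a ::ₘ t).esymmAvg (l + 2) * (a ::ₘ t).esymmAvg (l + 2) := by
        ring

theorem strictMonoOn_esymmAvg_div_esymmAvg_cons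
    (hpos : ∀ i, 1 ≤ i → i ≤ k → 0 < (a ::ₘ t).esymmAvg i) :
    StrictMonoOn (fun m : ℕ => ((m - 1 : ℕ) : ℝ) * t.esymmAvg (m - 2) / (a ::ₘ t).esymmAvg m)
      (Set.Icc 1 k) := by
  refine strictMonoOn_of_lt_add_one Set.ordConnected_Icc fun m _ ⟨hm, _⟩ ⟨_, hmk⟩ => ?_
  have hE := hpos m hm (by omega)
  have hE' := hpos (m + 1) (by omega) hmk
  rcases m with _ | _ | l
  · omega
  · simpa using hE'
  · rw [div_lt_div_iff₀ hE hE']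
    simp only [show l + 1 + 1 - 1 = l + 1 by omega, show l + 1 + 1 - 2 = l by omega,
      show l + 1 + 1 + 1 - 1 = l + 2 by omega, show l + 1 + 1 + 1 - 2 = l + 1 by omega]
    push_cast
    rw [show l + 1 + 1 = l + 2 from rfl, show l + 2 + 1 = l + 3 from rfl]
    linarith [esymmAvg_mul_esymmAvg_cons_lt hpos (l := l) (by omega)]

end Deletion

end Multiset

open Finset in
theorem univ_val_map_eq_cons {n : ℕ} (x : Fin n → ℝ) (p : Fin n) :
    univ.val.map x = x p ::ₘ (univ.erase p).val.map x := by
  rw [← Multiset.map_cons, erase_val, Multiset.cons_erase (mem_univ_val p)]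

open Finset in
theorem Hnorm_eq_esymmAvg (n m : ℕ) (x : Fin n → ℝ) :
    Hnorm n m x = (univ.val.map x).esymmAvg m := by
  rw [Hnorm, sigmaE, Multiset.esymmAvg, esymm_map_val, Multiset.card_map, card_val, card_univ,
    Fintype.card_fin]

open Finset in
theorem HnormDel_eq_esymmAvg (n m : ℕ) (p : Fin n) (x : Fin n → ℝ) :
    HnormDel n m p x = ((univ.erase p).val.map x).esymmAvg m := by
  rw [HnormDel, sigmaDel, Multiset.esymmAvg, esymm_map_val, Multiset.card_map, card_val,
    card_erase_of_mem (mem_univ p), card_univ, Fintype.card_fin]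

theorem esymmAvg_pos_of_mem_gardingCone {n k : ℕ} {x : Fin n → ℝ} (hx : x ∈ GardingCone n k)
    {i : ℕ} (hi : 1 ≤ i) (hik : i ≤ k) : 0 < (Finset.univ.val.map x).esymmAvg i := by
  rw [Multiset.esymmAvg_pos_iff, Finset.esymm_map_val]
  exact hx i hi hik

theorem stmt7_general (n k i j : ℕ) (hi : 1 ≤ i) (hij : i < j) (hjk : j ≤ k)
    (ε : ℝ) (κ : Fin n → ℝ) (p : Fin n)
    (hx : (fun q => κ q - ε) ∈ GardingCone n k) :
    ((j - 1 : ℕ) : ℝ) * HnormDel n (j-2) p (fun q => κ q - ε) * Hnorm n i (fun q => κ q - ε)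
      > ((i - 1 : ℕ) : ℝ) * Hnorm n j (fun q => κ q - ε) *
          HnormDel n (i-2) p (fun q => κ q - ε) := by
  set x : Fin n → ℝ := fun q => κ q - ε
  have hpos : ∀ m, 1 ≤ m → m ≤ k → 0 < (x p ::ₘ (Finset.univ.erase p).val.map x).esymmAvg m :=
    fun m hm hmk => univ_val_map_eq_cons x p ▸ esymmAvg_pos_of_mem_gardingCone hx hm hmk
  have hmono := Multiset.strictMonoOn_esymmAvg_div_esymmAvg_cons hpos ⟨hi, by omega⟩
    ⟨by omega, hjk⟩ hij
  rw [div_lt_div_iff₀ (hpos i hi (by omega)) (hpos j (by omega) hjk)] at hmono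
  simp only [Hnorm_eq_esymmAvg, HnormDel_eq_esymmAvg, univ_val_map_eq_cons x p]
  linarith

/-- For `κ - ε ∈ Γ_k⁺`, `1 ≤ i < j ≤ k`, `j ≥ 2` and `1 ≤ p ≤ n`,
`(j-1) H_{j-2;p}(κ-ε) H_i(κ-ε) > (i-1) H_j(κ-ε) H_{i-2;p}(κ-ε)`.
(By convention `H_{-1;p} = 0`; for `i = 1` the coefficient `i-1 = 0` makes the
right-hand side vanish.) -/
theorem stmt7 (n k i j : ℕ) (hi : 1 ≤ i) (hij : i < j) (hjk : j ≤ k) (hkn : k ≤ n)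
    (hj2 : 2 ≤ j) (ε : ℝ) (κ : Fin n → ℝ) (p : Fin n)
    (hx : (fun q => κ q - ε) ∈ GardingCone n k) :
    ((j - 1 : ℕ) : ℝ) * HnormDel n (j-2) p (fun q => κ q - ε) * Hnorm n i (fun q => κ q - ε)
      > ((i - 1 : ℕ) : ℝ) * Hnorm n j (fun q => κ q - ε) *
          HnormDel n (i-2) p (fun q => κ q - ε) :=
  stmt7_general n k i j hi hij hjk ε κ p hx
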